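/- arXiv:1904.11958 — 3 statements merged into one kernel-verified Lean document; each statement's English description precedes it below -/
import Mathlib

section
/- Let a ∈ ℂ, n ∈ ℕ, and z ∈ ℂ with ‖z‖ < 1. Then the n-th Meixner moment satisfies ∑_{x=0}^∞ φ_n(x)·(a)_x·z^x/x! = z^n·(a)_n·(1 − z)^{−a−n}, where (1 − z)^{−a−n} denotes the principal branch of the complex power. -/
/-!
Substituting `x = k + n` (the terms with `x < n` vanish), one has `φ_n(k + n) / (k + n)! = 1 / k!`
and `(a)_{k+n} = (a)_n (a + n)_k`, so the sum is `z^n (a)_n` times the binomial series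
`∑ (c)_k z^k / k! = (1 - z)^{-c}` with `c = a + n`: this is Mathlib's power series of
`(1 - z)^{-c}`, whose coefficients `Ring.choose (c + k - 1) k` equal `(c)_k / k!`.
-/

open Finset

/-- The Pochhammer symbol `(c)_n = ∏_{j=0}^{n-1} (c + j)`. -/
noncomputable def poch (c : ℂ) (n : ℕ) : ℂ := ∏ j ∈ Finset.range n, (c + (j : ℂ))

/-- The falling factorial `φ_n(x) = ∏_{j=0}^{n-1} (x - j)`. -/
noncomputable def fallFac (n : ℕ) (x : ℂ) : ℂ := ∏ j ∈ Finset.range n, (x - (j : ℂ))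

open Polynomial
open scoped Nat

lemma poch_eq_ascPochhammer_eval (c : ℂ) (n : ℕ) : poch c n = (ascPochhammer ℂ n).eval c := by
  induction n with
  | zero => simp [poch]
  | succ n ih => rw [poch, prod_range_succ, ← poch, ih, ascPochhammer_succ_eval]

lemma fallFac_eq_descPochhammer_eval (n : ℕ) (x : ℂ) : fallFac n x = (descPochhammer ℂ n).eval x :=
  (descPochhammer_eval_eq_prod_range n x).symm

lemma poch_add (c : ℂ) (m k : ℕ) : poch c (m + k) = poch c m * poch (c + m) k := by
  simp only [poch, prod_range_add, Nat.cast_add, add_assoc]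

lemma ringChoose_add_sub_one_eq_poch_div_factorial (c : ℂ) (n : ℕ) :
    Ring.choose (c + n - 1) n = poch c n / n ! := by
  rw [Ring.choose_eq_smul, descPochhammer_smeval_eq_ascPochhammer, ascPochhammer_smeval_eq_eval,
    poch_eq_ascPochhammer_eval, smul_eq_mul, div_eq_inv_mul]
  ring_nf

lemma hasSum_poch_mul_pow_div_factorial (c : ℂ) {z : ℂ} (hz : ‖z‖ < 1) :
    HasSum (fun k : ℕ => poch c k * z ^ k / k !) ((1 - z) ^ (-c)) := by
  have hz' : z ∈ Metric.eball (0 : ℂ) 1 := by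
    simpa [Metric.eball, edist_zero_right, ← ofReal_norm] using hz
  have h := (Complex.one_div_one_sub_cpow_hasFPowerSeriesOnBall_zero c).hasSum hz'
  simpa only [FormalMultilinearSeries.ofScalars_apply_eq, ringChoose_add_sub_one_eq_poch_div_factorial, smul_eq_mul,
    div_mul_eq_mul_div, zero_add, one_div, Complex.cpow_neg] using h

lemma fallFac_natCast (n k : ℕ) : fallFac n k = k.descFactorial n := by
  rw [fallFac_eq_descPochhammer_eval, descPochhammer_eval_eq_descFactorial]

lemma fallFac_natCast_add (n k : ℕ) : fallFac n ((k + n : ℕ) : ℂ) = (k + n) ! / k ! := by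
  rw [eq_div_iff (Nat.cast_ne_zero.2 k.factorial_ne_zero), fallFac_natCast]
  exact_mod_cast by simpa [mul_comm] using Nat.factorial_mul_descFactorial (Nat.le_add_left n k)

lemma fallFac_natCast_of_lt {n x : ℕ} (h : x < n) : fallFac n x = 0 := by
  rw [fallFac_natCast, Nat.cast_eq_zero, Nat.descFactorial_eq_zero_iff_lt]
  exact h

lemma fallFac_mul_poch_mul_pow_div_factorial_add (a z : ℂ) (n k : ℕ) :
    fallFac n ((k + n : ℕ) : ℂ) * poch a (k + n) * z ^ (k + n) / (k + n) !
      = z ^ n * poch a n * (poch (a + n) k * z ^ k / k !) := by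
  have : ((n + k) ! : ℂ) ≠ 0 := Nat.cast_ne_zero.2 (n + k).factorial_ne_zero
  rw [fallFac_natCast_add, add_comm k n, poch_add, pow_add]
  field_simp

/-- the `n`-th Meixner moment:
`∑_{x≥0} φ_n(x) (a)_x z^x/x! = z^n (a)_n (1-z)^{-a-n}` (principal branch). -/
theorem meixner_moment (a : ℂ) (n : ℕ) (z : ℂ) (hz : ‖z‖ < 1) :
    (∑' x : ℕ, fallFac n (x : ℂ) * poch a x * z ^ x / (x.factorial : ℂ))
      = z ^ n * poch a n * (1 - z) ^ (-a - (n : ℂ)) := by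
  have hshift := (hasSum_poch_mul_pow_div_factorial (a + n) hz).mul_left (z ^ n * poch a n)
  simp_rw [← fallFac_mul_poch_mul_pow_div_factorial_add, neg_add'] at hshift
  refine ((hasSum_nat_add_iff' n).mp ?_).tsum_eq
  rw [sum_eq_zero fun x hx => by rw [fallFac_natCast_of_lt (mem_range.mp hx)]; ring, sub_zero]
  exact hshift
end

section
/- Let N ∈ ℕ, z ∈ ℂ, and let t ∈ ℂ satisfy t ≠ x and t + 1 ≠ x for every natural number x ≤ N. Then the Stieltjes transform S(t) = ∑_{x=0}^N (−N)_x·(z^x/x!)·1/(t − x) of the Krawtchouk weight satisfies (t + 1)·S(t + 1) − z·(t − N)·S(t) = (1 − z)^{N+1}. -/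
/-!
The weight `w x = (-N)_x z^x / x!` satisfies the Pearson-type recurrence
`(x + 1) w (x + 1) = z (x - N) w x`. Splitting `(t + 1) / (t + 1 - x) = 1 + x / (t + 1 - x)` and
`z (t - N) / (t - x) = z + z (x - N) / (t - x)`, the recurrence and an index shift make the two
remainder sums equal, so the left-hand side collapses to `(1 - z) ∑ w`. The zeroth moment
`∑ w = (1 - z)^N` is the binomial theorem, since `(-N)_x / x! = (-1)^x (N choose x)`.
-/

open Finset

lemma poch_succ (c : ℂ) (n : ℕ) : poch c (n + 1) = poch c n * (c + n) :=
  prod_range_succ _ _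

lemma poch_neg (r : ℂ) (n : ℕ) : poch (-r) n = (-1) ^ n * (descPochhammer ℂ n).eval r := by
  have h := prod_neg (s := range n) fun j : ℕ => r - j
  rw [card_range] at h
  rw [poch, descPochhammer_eval_eq_prod_range, ← h]
  exact prod_congr rfl fun j _ => by ring

lemma poch_neg_natCast (N n : ℕ) :
    poch (-(N : ℂ)) n = (-1) ^ n * n.factorial * N.choose n := by
  rw [poch_neg, descPochhammer_eval_eq_descFactorial, Nat.descFactorial_eq_factorial_mul_choose]
  push_cast
  ring

section Pearson

variable {K : Type*} [Field K]

lemma sub_mul_sum_div_sub (w : ℕ → K) (N : ℕ) (a s : K) (hs : ∀ x ≤ N, s ≠ x) :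
    (s - a) * ∑ x ∈ range (N + 1), w x / (s - x)
      = ∑ x ∈ range (N + 1), w x + ∑ x ∈ range (N + 1), (x - a) * w x / (s - x) := by
  rw [mul_sum, ← sum_add_distrib]
  refine sum_congr rfl fun x hx => ?_
  have := sub_ne_zero.mpr (hs x (Nat.lt_succ_iff.mp (mem_range.mp hx)))
  field_simp
  ring

theorem stieltjes_shift_of_pearson (w : ℕ → K) (N : ℕ) (z t : K)
    (hw : ∀ x < N, (x + 1 : K) * w (x + 1) = z * (x - N) * w x)
    (ht : ∀ x ≤ N, t ≠ x) (ht1 : ∀ x ≤ N, t + 1 ≠ x) :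
    (t + 1) * ∑ x ∈ range (N + 1), w x / (t + 1 - x)
      - z * (t - N) * ∑ x ∈ range (N + 1), w x / (t - x)
      = (1 - z) * ∑ x ∈ range (N + 1), w x := by
  have split₁ := sub_mul_sum_div_sub w N 0 (t + 1) ht1
  have split₂ := sub_mul_sum_div_sub w N N t ht
  simp only [sub_zero] at split₁
  -- the boundary terms carry the factors `x = 0` and `x - N = 0`
  have shift : ∑ x ∈ range (N + 1), x * w x / (t + 1 - x)
      = z * ∑ x ∈ range (N + 1), (x - N) * w x / (t - x) := by
    rw [mul_sum, sum_range_succ', sum_range_succ]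
    simp only [Nat.cast_zero, zero_mul, zero_div, add_zero, sub_self, mul_zero]
    refine sum_congr rfl fun x hx => ?_
    rw [← mul_div_assoc, ← mul_assoc, ← hw x (mem_range.mp hx)]
    push_cast
    ring_nf
  rw [split₁, mul_assoc, split₂, shift]
  ring

end Pearson

noncomputable def krawtchoukWeight (N : ℕ) (z : ℂ) (x : ℕ) : ℂ :=
  poch (-(N : ℂ)) x * (z ^ x / (x.factorial : ℂ))

lemma krawtchoukWeight_pearson (N : ℕ) (z : ℂ) (x : ℕ) :
    (x + 1 : ℂ) * krawtchoukWeight N z (x + 1) = z * (x - N) * krawtchoukWeight N z x := by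
  have : (x.factorial : ℂ) ≠ 0 := Nat.cast_ne_zero.mpr (Nat.factorial_ne_zero x)
  rw [krawtchoukWeight, krawtchoukWeight, poch_succ, Nat.factorial_succ]
  push_cast
  field_simp
  ring

lemma sum_krawtchoukWeight (N : ℕ) (z : ℂ) :
    ∑ x ∈ range (N + 1), krawtchoukWeight N z x = (1 - z) ^ N := by
  rw [sub_eq_neg_add, add_pow]
  refine sum_congr rfl fun x _ => ?_
  have : (x.factorial : ℂ) ≠ 0 := Nat.cast_ne_zero.mpr (Nat.factorial_ne_zero x)
  rw [krawtchoukWeight, poch_neg_natCast]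
  field_simp
  ring

/-- the Stieltjes transform `S(t) = ∑_{x=0}^N (-N)_x (z^x/x!)/(t-x)` of the
Krawtchouk weight satisfies `(t+1) S(t+1) - z (t-N) S(t) = (1-z)^{N+1}`. -/
theorem krawtchouk_stieltjes (N : ℕ) (z t : ℂ)
    (ht : ∀ x : ℕ, x ≤ N → t ≠ (x : ℂ)) (ht1 : ∀ x : ℕ, x ≤ N → t + 1 ≠ (x : ℂ)) :
    (t + 1) * (∑ x ∈ Finset.range (N + 1),
        poch (-(N : ℂ)) x * (z ^ x / (x.factorial : ℂ)) * (1 / (t + 1 - (x : ℂ))))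
      - z * (t - (N : ℂ)) * (∑ x ∈ Finset.range (N + 1),
        poch (-(N : ℂ)) x * (z ^ x / (x.factorial : ℂ)) * (1 / (t - (x : ℂ))))
      = (1 - z) ^ (N + 1) := by
  have key := stieltjes_shift_of_pearson (krawtchoukWeight N z) N z t
    (fun x _ => krawtchoukWeight_pearson N z x) ht ht1
  rw [sum_krawtchoukWeight, ← pow_succ'] at key
  simpa only [krawtchoukWeight, mul_one_div] using key
end

section
/- Let b, z ∈ ℂ with b + 1 + k ≠ 0 for every k ∈ ℕ, and let t ∈ ℂ satisfy t ≠ x and t + 1 ≠ x for every x ∈ ℕ. Let ρ(x) = z^x/((b + 1)_x·x!) be the generalized Charlier weight, and set ν₀ = ∑_{x=0}^∞ ρ(x) and ν₁ = ∑_{x=0}^∞ x·ρ(x). Then the Stieltjes transform S(t) = ∑_{x=0}^∞ ρ(x)/(t − x) satisfies (t + 1)·(t + b + 1)·S(t + 1) − z·S(t) = (t + b + 1)·ν₀ + ν₁. -/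
/-!
The weight satisfies the Pearson equation `(x + 1)(x + b + 1) ρ(x + 1) = z ρ(x)`, so shifting the
summation index turns `z S(t)` into `∑ ρ(x) x (x + b) / (t + 1 - x)`. Since
`(t + 1)(t + b + 1) - x (x + b) = (t + 1 - x)(t + b + 1 + x)`, subtracting this series from
`(t + 1)(t + b + 1) S(t + 1)` cancels every denominator and leaves `∑ (t + b + 1 + x) ρ(x)`.
All series converge because `ρ(x + 1) / ρ(x) → 0`.
-/

open Finset

open Filter Topology

theorem summable_of_succ_eq_mul_of_tendsto_zero {R : Type*} [NormedRing R] [CompleteSpace R]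
    {f q : ℕ → R} (hq : Tendsto q atTop (𝓝 0)) (hf : ∀ n, f (n + 1) = q n * f n) :
    Summable f := by
  refine summable_of_ratio_norm_eventually_le one_half_lt_one ?_
  filter_upwards [hq.norm.eventually_le_const (by norm_num : ‖(0 : R)‖ < 1 / 2)] with n hn
  rw [hf]
  exact (norm_mul_le _ _).trans (by gcongr)

theorem Summable.mul_tendsto {f w : ℕ → ℂ} {a : ℂ} (hf : Summable f)
    (hw : Tendsto w atTop (𝓝 a)) : Summable fun n ↦ f n * w n :=
  summable_of_isBigO_nat' hf <| by
    simpa using (Asymptotics.isBigO_refl f atTop).mul (hw.isBigO_one ℂ)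

theorem tendsto_inv_const_add_natCast {𝕜 : Type*} [RCLike 𝕜] (c : 𝕜) :
    Tendsto (fun n : ℕ ↦ (c + n)⁻¹) atTop (𝓝 0) :=
  tendsto_inv₀_cobounded.comp <|
    (tendsto_const_add_cobounded c).comp tendsto_natCast_atTop_cobounded

theorem tendsto_inv_const_sub_natCast {𝕜 : Type*} [RCLike 𝕜] (c : 𝕜) :
    Tendsto (fun n : ℕ ↦ (c - n)⁻¹) atTop (𝓝 0) :=
  tendsto_inv₀_cobounded.comp <|
    (tendsto_const_sub_cobounded c).comp tendsto_natCast_atTop_cobounded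

theorem poch_ne_zero {c : ℂ} (hc : ∀ k : ℕ, c + k ≠ 0) (n : ℕ) : poch c n ≠ 0 :=
  prod_ne_zero_iff.2 fun k _ ↦ hc k

noncomputable def charlierWeight (b z : ℂ) (x : ℕ) : ℂ :=
  z ^ x / (poch (b + 1) x * x.factorial)

section charlierWeight

variable {b : ℂ} (z : ℂ)

theorem charlierWeight_pearson (hb : ∀ k : ℕ, b + 1 + k ≠ 0) (n : ℕ) :
    (n + 1) * (b + 1 + n) * charlierWeight b z (n + 1) = z * charlierWeight b z n := by
  have := poch_ne_zero hb n
  have : (n.factorial : ℂ) ≠ 0 := Nat.cast_ne_zero.2 n.factorial_ne_zero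
  have : b + 1 + n ≠ 0 := hb n
  simp only [charlierWeight, poch, prod_range_succ, Nat.factorial_succ]
  push_cast
  field_simp
  ring

theorem summable_charlierWeight (hb : ∀ k : ℕ, b + 1 + k ≠ 0) :
    Summable (charlierWeight b z) := by
  refine summable_of_succ_eq_mul_of_tendsto_zero
    (q := fun n ↦ z * ((b + 1 + n)⁻¹ * (1 + (n : ℂ))⁻¹)) ?_ fun n ↦ ?_
  · simpa using ((tendsto_inv_const_add_natCast (b + 1)).mul
      (tendsto_inv_const_add_natCast 1)).const_mul z
  · have : (1 + n : ℂ) ≠ 0 := by norm_cast; omega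
    have := hb n
    field_simp
    linear_combination charlierWeight_pearson z hb n

theorem summable_natCast_mul_charlierWeight (hb : ∀ k : ℕ, b + 1 + k ≠ 0) :
    Summable fun n : ℕ ↦ (n : ℂ) * charlierWeight b z n := by
  refine (summable_nat_add_iff 1).1 ?_
  refine ((summable_charlierWeight z hb).mul_tendsto
    ((tendsto_inv_const_add_natCast (b + 1)).const_mul z)).congr fun n ↦ ?_
  have := hb n
  push_cast
  field_simp
  linear_combination -charlierWeight_pearson z hb n

theorem summable_charlierWeight_mul_one_div_sub (hb : ∀ k : ℕ, b + 1 + k ≠ 0) (c : ℂ) :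
    Summable fun n : ℕ ↦ charlierWeight b z n * (1 / (c - n)) := by
  simpa using (summable_charlierWeight z hb).mul_tendsto (tendsto_inv_const_sub_natCast c)

theorem hasSum_charlierWeight_mul_div_sub (hb : ∀ k : ℕ, b + 1 + k ≠ 0) (t : ℂ) :
    HasSum (fun n : ℕ ↦ charlierWeight b z n * (n * (b + n) / (t + 1 - n)))
      (z * ∑' n : ℕ, charlierWeight b z n * (1 / (t - n))) := by
  have shift : ∀ n : ℕ, z * (charlierWeight b z n * (1 / (t - n)))
      = charlierWeight b z (n + 1)
          * ((n + 1 : ℕ) * (b + (n + 1 : ℕ)) / (t + 1 - (n + 1 : ℕ))) := by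
    intro n
    push_cast
    rw [show t + 1 - (n + 1) = t - n by ring, ← mul_assoc, ← charlierWeight_pearson z hb]
    ring
  rw [← hasSum_nat_add_iff' 1, sum_range_one]
  simpa only [shift, Nat.cast_zero, zero_mul, zero_div, mul_zero, sub_zero] using
    (summable_charlierWeight_mul_one_div_sub z hb t).hasSum.mul_left z

end charlierWeight

theorem generalized_charlier_stieltjes_general (b z : ℂ)
    (hb : ∀ k : ℕ, b + 1 + (k : ℂ) ≠ 0)
    (t : ℂ) (ht1 : ∀ x : ℕ, t + 1 ≠ (x : ℂ)) :
    (t + 1) * (t + b + 1) * (∑' x : ℕ,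
        z ^ x / (poch (b + 1) x * (x.factorial : ℂ)) * (1 / (t + 1 - (x : ℂ))))
      - z * (∑' x : ℕ,
        z ^ x / (poch (b + 1) x * (x.factorial : ℂ)) * (1 / (t - (x : ℂ))))
      = (t + b + 1) * (∑' x : ℕ, z ^ x / (poch (b + 1) x * (x.factorial : ℂ)))
          + ∑' x : ℕ, (x : ℂ) * (z ^ x / (poch (b + 1) x * (x.factorial : ℂ))) := by
  change (t + 1) * (t + b + 1) * ∑' x : ℕ, charlierWeight b z x * (1 / (t + 1 - x))
      - z * ∑' x : ℕ, charlierWeight b z x * (1 / (t - x))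
    = (t + b + 1) * ∑' x : ℕ, charlierWeight b z x + ∑' x : ℕ, x * charlierWeight b z x
  have termwise : ∀ x : ℕ,
      (t + 1) * (t + b + 1) * (charlierWeight b z x * (1 / (t + 1 - x)))
        - charlierWeight b z x * (x * (b + x) / (t + 1 - x))
      = (t + b + 1) * charlierWeight b z x + x * charlierWeight b z x := by
    intro x
    have := sub_ne_zero.2 (ht1 x)
    field_simp
    ring
  have lhs := ((summable_charlierWeight_mul_one_div_sub z hb (t + 1)).hasSum.mul_left
    ((t + 1) * (t + b + 1))).sub (hasSum_charlierWeight_mul_div_sub z hb t)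
  have rhs := ((summable_charlierWeight z hb).hasSum.mul_left (t + b + 1)).add
    (summable_natCast_mul_charlierWeight z hb).hasSum
  simp only [termwise] at lhs
  exact lhs.unique rhs

/-- the Stieltjes transform `S(t) = ∑_{x≥0} ρ(x)/(t-x)` of the generalized
Charlier weight `ρ(x) = z^x/((b+1)_x x!)` satisfies
`(t+1)(t+b+1) S(t+1) - z S(t) = (t+b+1) ν₀ + ν₁`. -/
theorem generalized_charlier_stieltjes (b z : ℂ)
    (hb : ∀ k : ℕ, b + 1 + (k : ℂ) ≠ 0)
    (t : ℂ) (ht : ∀ x : ℕ, t ≠ (x : ℂ)) (ht1 : ∀ x : ℕ, t + 1 ≠ (x : ℂ)) :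
    (t + 1) * (t + b + 1) * (∑' x : ℕ,
        z ^ x / (poch (b + 1) x * (x.factorial : ℂ)) * (1 / (t + 1 - (x : ℂ))))
      - z * (∑' x : ℕ,
        z ^ x / (poch (b + 1) x * (x.factorial : ℂ)) * (1 / (t - (x : ℂ))))
      = (t + b + 1) * (∑' x : ℕ, z ^ x / (poch (b + 1) x * (x.factorial : ℂ)))
          + ∑' x : ℕ, (x : ℂ) * (z ^ x / (poch (b + 1) x * (x.factorial : ℂ))) :=
  generalized_charlier_stieltjes_general b z hb t ht1
end
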